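/- Optimal cost of the restricted task: let Π be a planning task, s a state in which the fresh atom ε is false and with G ⊄ s, and 𝒜' ⊆ 𝒜 a set of actions. Let h*_Π(s) ∈ ℕ∞ denote the minimal length of a plan of Π starting from s (∞ if none exists), and similarly for Π_{𝒜'}. Then h*_{Π_{𝒜'}}(s) = min over a ∈ 𝒜' applicable in s of (1 + h*_Π(succ(s,a))), where the minimum over the empty set is ∞. -/

import Mathlib

/-!
In a state where `ε` is false the goal is not reached and no original action is applicable,
so the Bellman equation for `h*` ranges only over the copies `a⁺` with `a ∈ 𝒜'` applicable in
`s`. After `a⁺` fires, `ε` stays true forever and `Π_{𝒜'}` behaves like `Π`: mapping `a ↦ a`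
and `a⁺ ↦ a` turns its plans into plans of `Π` of the same length, and conversely every plan
of `Π` is one of `Π_{𝒜'}`.
-/

namespace PS

/-- A ground planning task over atom type `Atom` and action type `Act`. -/
structure GroundTask (Atom Act : Type) where
  pre : Act → Set Atom
  add : Act → Set Atom
  del : Act → Set Atom
  init : Set Atom
  goal : Set Atom

variable {Atom Act : Type}

/-- `succ(s,a) = (s \ del(a)) ∪ add(a)`. -/
def applyAct (P : GroundTask Atom Act) (s : Set Atom) (a : Act) : Set Atom :=
  (s \ P.del a) ∪ P.add a

/-- `IsPlanFrom P s π`: `π` is a valid plan for `P` starting from state `s`. -/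
inductive IsPlanFrom (P : GroundTask Atom Act) : Set Atom → List Act → Prop
  | nil {s : Set Atom} : P.goal ⊆ s → IsPlanFrom P s []
  | cons {s : Set Atom} {a : Act} {l : List Act} :
      P.pre a ⊆ s → IsPlanFrom P (applyAct P s a) l → IsPlanFrom P s (a :: l)

/-- The `𝒜'`-restricted task `Π_{𝒜'}`. Atoms are `Option Atom`, with the fresh atom
`ε = none` (initially false). Actions are either original actions (`Sum.inl`), which get `ε`
added to their precondition, or new copies `a⁺` (`Sum.inr`) of actions `a ∈ 𝒜'`, which are
identical to `a` except for the additional add effect `ε`. -/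
def restrict (P : GroundTask Atom Act) (A' : Set Act) :
    GroundTask (Option Atom) (Act ⊕ {a : Act // a ∈ A'}) where
  pre := fun b => match b with
    | .inl a => insert none (some '' P.pre a)
    | .inr a => some '' P.pre a.val
  add := fun b => match b with
    | .inl a => some '' P.add a
    | .inr a => insert (none : Option Atom) (some '' P.add a.val)
  del := fun b => match b with
    | .inl a => some '' P.del a
    | .inr a => some '' P.del a.val
  init := some '' P.init
  goal := some '' P.goal

/-- Replace each copy `a⁺` by its original `a`, keeping original actions unchanged. -/
def unrestrict {A' : Set Act} : Act ⊕ {a : Act // a ∈ A'} → Act :=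
  Sum.elim id Subtype.val


/-- `h*`: the minimal length of a plan starting from `s` (`⊤` if none exists). -/
noncomputable def hStar (P : GroundTask Atom Act) (s : Set Atom) : ℕ∞ :=
  sInf {n : ℕ∞ | ∃ π : List Act, IsPlanFrom P s π ∧ (π.length : ℕ∞) = n}

theorem hStar_eq_iInf (P : GroundTask Atom Act) (s : Set Atom) :
    hStar P s = ⨅ (π : List Act) (_ : IsPlanFrom P s π), (π.length : ℕ∞) :=
  sInf_image

/-- Bellman equation for `h*` at a non-goal state. -/
theorem hStar_eq_iInf_applyAct {P : GroundTask Atom Act} {s : Set Atom} (hG : ¬ P.goal ⊆ s) :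
    hStar P s = ⨅ (a : Act) (_ : P.pre a ⊆ s), 1 + hStar P (applyAct P s a) := by
  simp_rw [hStar_eq_iInf, ENat.add_iInf₂]
  apply le_antisymm
  · refine le_iInf₂ fun a ha => le_iInf₂ fun l hl => ?_
    refine iInf₂_le_of_le (a :: l) (.cons ha hl) ?_
    simp [add_comm]
  · refine le_iInf₂ fun π hπ => ?_
    cases hπ with
    | nil hgoal => exact absurd hgoal hG
    | cons ha hl =>
      refine iInf₂_le_of_le _ ha (iInf₂_le_of_le _ hl ?_)
      simp [add_comm]

section Restrict

variable (P : GroundTask Atom Act) (A' : Set Act)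

theorem some_image_subset_insert_none_iff {A B : Set Atom} :
    some '' A ⊆ insert none (some '' B) ↔ A ⊆ B := by
  rw [Set.subset_insert_iff_of_notMem (by simp), Set.image_subset_image_iff (Option.some_injective _)]

theorem pre_restrict_subset_insert_none_iff (t : Set Atom) (b : Act ⊕ {a : Act // a ∈ A'}) :
    (restrict P A').pre b ⊆ insert none (some '' t) ↔ P.pre (unrestrict b) ⊆ t := by
  cases b with
  | inl a =>
    rw [restrict, Set.insert_subset_insert_iff (by simp),
      Set.image_subset_image_iff (Option.some_injective _)]
    rfl
  | inr a => exact some_image_subset_insert_none_iff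

theorem applyAct_restrict_insert_none (t : Set Atom) (b : Act ⊕ {a : Act // a ∈ A'}) :
    applyAct (restrict P A') (insert none (some '' t)) b =
      insert none (some '' applyAct P t (unrestrict b)) := by
  cases b <;> ext (_ | x) <;> simp [applyAct, restrict, unrestrict]

theorem applyAct_restrict_inr (s : Set Atom) (a : {a : Act // a ∈ A'}) :
    applyAct (restrict P A') (some '' s) (.inr a) = insert none (some '' applyAct P s a) := by
  ext (_ | x) <;> simp [applyAct, restrict]

variable {P A'}

theorem IsPlanFrom.map_inl {t : Set Atom} {π : List Act} (h : IsPlanFrom P t π) :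
    IsPlanFrom (restrict P A') (insert none (some '' t)) (π.map .inl) := by
  induction h with
  | nil hgoal => exact .nil (some_image_subset_insert_none_iff.mpr hgoal)
  | @cons t a l ha _ ih =>
    refine .cons ((pre_restrict_subset_insert_none_iff P A' t (.inl a)).mpr ha) ?_
    rwa [applyAct_restrict_insert_none]

theorem IsPlanFrom.map_unrestrict {t : Set Atom} {π : List (Act ⊕ {a : Act // a ∈ A'})}
    (h : IsPlanFrom (restrict P A') (insert none (some '' t)) π) :
    IsPlanFrom P t (π.map unrestrict) := by
  induction π generalizing t with
  | nil =>
    cases h with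
    | nil hgoal => exact .nil (some_image_subset_insert_none_iff.mp hgoal)
  | cons b l ih =>
    cases h with
    | cons hb hl =>
      rw [applyAct_restrict_insert_none] at hl
      exact .cons ((pre_restrict_subset_insert_none_iff P A' t b).mp hb) (ih hl)

variable (P A')

theorem hStar_restrict_insert_none (t : Set Atom) :
    hStar (restrict P A') (insert none (some '' t)) = hStar P t := by
  rw [hStar_eq_iInf, hStar_eq_iInf]
  apply le_antisymm
  · exact le_iInf₂ fun π hπ => iInf₂_le_of_le _ hπ.map_inl (by simp)
  · exact le_iInf₂ fun π hπ => iInf₂_le_of_le _ hπ.map_unrestrict (by simp)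

end Restrict

/-- **Optimal cost of the restricted task**: for a state `s` in which the fresh atom `ε` is
false (embedded as `some '' s`) and with `G ⊄ s`,
`h*_{Π_{𝒜'}}(s) = min_{a ∈ 𝒜' applicable in s} (1 + h*_Π(succ(s,a)))`,
where the minimum over the empty set is `∞`. -/
theorem restricted_task_cost {Atom Act : Type} (P : GroundTask Atom Act)
    (s : Set Atom) (A' : Set Act) (hG : ¬ P.goal ⊆ s) :
    hStar (restrict P A') (some '' s) =
      ⨅ (a : Act) (_ : a ∈ A') (_ : P.pre a ⊆ s), (1 + hStar P (applyAct P s a)) := by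
  have hsome : ∀ {A B : Set Atom}, some '' A ⊆ some '' B ↔ A ⊆ B :=
    Set.image_subset_image_iff (Option.some_injective _)
  -- an original action needs `ε`, which is false in `s`
  have hinl : ⨅ (a : Act) (_ : (restrict P A').pre (.inl a) ⊆ some '' s),
      1 + hStar (restrict P A') (applyAct (restrict P A') (some '' s) (.inl a)) = ⊤ :=
    iInf_eq_top.mpr fun a => iInf_neg fun h => by simpa using h (Set.mem_insert _ _)
  have hinr (a : {a : Act // a ∈ A'}) : (restrict P A').pre (.inr a) ⊆ some '' s ↔ P.pre a ⊆ s :=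
    hsome
  rw [hStar_eq_iInf_applyAct (hsome.not.mpr hG), iInf_sum, hinl, top_inf_eq]
  simp only [hinr, applyAct_restrict_inr, hStar_restrict_insert_none]
  exact iInf_subtype

end PS
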